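/- arXiv:2412.20365 — 6 statements merged into one kernel-verified Lean document; each statement's English description precedes it below -/
import Mathlib

section
/- Let Γ be a finite N-player game, a* a strict Nash equilibrium of Γ with minimum payoff margin c > 0, and fix a friction parameter r ≥ 0 and an initial time t₀ > 0. Let y : [t₀, ∞) → ∏_i ℝ^{A_i} be twice differentiable and solve the accelerated FTXL dynamics with logit best responses: for every player i, every a ∈ A_i and every t ≥ t₀, ÿ_{i,a}(t) = v_{i,a}(Λ(y(t))) − (r/t)·ẏ_{i,a}(t), with ẏ(t₀) = 0, and set x(t) = Λ(y(t)). Then there exists M > 0, depending only on Γ and a*, such that whenever the initialization satisfies y_{i,a}(t₀) − y_{i,a*_i}(t₀) < −M for every player i and every action a ≠ a*_i, the trajectory x(t) converges to x* as t → ∞, and moreover there is a constant C > 0 depending only on the initialization such that ‖x(t) − x*‖∞ ≤ exp(C − c(t − t₀)²/(2(r + 1))) for all t ≥ t₀. -/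
open Filter

/-- The logit (softmax) choice map. -/
noncomputable def logit {α : Type*} [Fintype α] (y : α → ℝ) : α → ℝ :=
  fun a => Real.exp (y a) / ∑ b, Real.exp (y b)

/-- Mixed extension of a payoff function: `∑_a (∏_j x_j(a_j)) u(a)`. -/
def mixedPayoff {N : ℕ} {A : Fin N → Type*} [∀ j, Fintype (A j)]
    (ui : (∀ j, A j) → ℝ) (x : ∀ j, A j → ℝ) : ℝ :=
  ∑ a : ∀ j, A j, (∏ j, x j (a j)) * ui a

/-- Payoff vector `v_{i,aᵢ}(x) = u_i(aᵢ ; x₋ᵢ)`: player `i` plays the point mass at `aᵢ`. -/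
def payVec {N : ℕ} {A : Fin N → Type*} [∀ j, Fintype (A j)] [∀ j, DecidableEq (A j)]
    (u : ∀ _ : Fin N, (∀ j, A j) → ℝ) (i : Fin N) (ai : A i) (x : ∀ j, A j → ℝ) : ℝ :=
  mixedPayoff (u i) (Function.update x i (fun b => if b = ai then (1 : ℝ) else 0))

/-! ### Auxiliary definitions and lemmas -/

/-- The pure (point-mass) mixed profile concentrated on `p`. -/
def purePt {N : ℕ} {A : Fin N → Type*} [∀ j, Fintype (A j)] [∀ j, DecidableEq (A j)]
    (p : ∀ j, A j) : ∀ j, A j → ℝ := fun j b => if b = p j then 1 else 0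

lemma mixedPayoff_pure {N : ℕ} {A : Fin N → Type*} [∀ j, Fintype (A j)] [∀ j, DecidableEq (A j)]
    (ui : (∀ j, A j) → ℝ) (p : ∀ j, A j) : mixedPayoff ui (purePt p) = ui p := by
  unfold mixedPayoff purePt
  rw [Finset.sum_eq_single p]
  · simp
  · intro a _ hne
    have : ∃ j, a j ≠ p j := by
      by_contra h; push_neg at h; exact hne (funext h)
    obtain ⟨j, hj⟩ := this
    rw [Finset.prod_eq_zero (Finset.mem_univ j) (by simp [hj])]
    ring
  · simp

lemma update_pure {N : ℕ} {A : Fin N → Type*} [∀ j, Fintype (A j)] [∀ j, DecidableEq (A j)]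
    (p : ∀ j, A j) (i : Fin N) (a : A i) :
    Function.update (purePt p) i (fun b => if b = a then (1:ℝ) else 0)
      = purePt (Function.update p i a) := by
  funext j
  by_cases h : j = i
  · subst h; funext b; simp [purePt]
  · funext b; simp [purePt, Function.update_of_ne h]

lemma payVec_pure {N : ℕ} {A : Fin N → Type*} [∀ j, Fintype (A j)] [∀ j, DecidableEq (A j)]
    (u : ∀ _ : Fin N, (∀ j, A j) → ℝ) (i : Fin N) (a : A i) (p : ∀ j, A j) :
    payVec u i a (purePt p) = u i (Function.update p i a) := by
  rw [payVec, update_pure, mixedPayoff_pure]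

lemma continuous_payVec {N : ℕ} {A : Fin N → Type*} [∀ j, Fintype (A j)] [∀ j, DecidableEq (A j)]
    (u : ∀ _ : Fin N, (∀ j, A j) → ℝ) (i : Fin N) (ai : A i) :
    Continuous (fun x : ∀ j, A j → ℝ => payVec u i ai x) := by
  have hupd : Continuous (fun x : ∀ j, A j → ℝ =>
      Function.update x i (fun b => if b = ai then (1:ℝ) else 0)) := by
    apply continuous_pi
    intro j
    by_cases h : j = i
    · subst h; simpa using continuous_const
    · simp only [Function.update_of_ne h]; exact continuous_apply j
  have hmix : Continuous (fun x : ∀ j, A j → ℝ => mixedPayoff (u i) x) := by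
    unfold mixedPayoff
    apply continuous_finset_sum
    intro a _
    exact (continuous_finset_prod _ fun j _ =>
      (continuous_apply (a j)).comp (continuous_apply j)).mul continuous_const
  exact hmix.comp hupd

lemma exists_delta {N : ℕ} {A : Fin N → Type*} [∀ j, Fintype (A j)] [∀ j, Nonempty (A j)]
    [∀ j, DecidableEq (A j)]
    (u : ∀ _ : Fin N, (∀ j, A j) → ℝ) (aStar : ∀ i, A i)
    (c : ℝ) (hc : 0 < c)
    (hmargin : ∀ (i : Fin N) (a : A i), a ≠ aStar i →
      2 * c ≤ u i aStar - u i (Function.update aStar i a)) :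
    ∃ δ > (0:ℝ), ∀ x : ∀ j, A j → ℝ, (∀ j b, |x j b - purePt aStar j b| ≤ δ) →
      ∀ (i : Fin N) (a : A i), a ≠ aStar i →
        payVec u i a x - payVec u i (aStar i) x ≤ -c := by
  have hev : ∀ᶠ x in nhds (purePt aStar), ∀ (i : Fin N) (a : A i), a ≠ aStar i →
      payVec u i a x - payVec u i (aStar i) x < -c := by
    rw [eventually_all]
    intro i
    rw [eventually_all]
    intro a
    rcases eq_or_ne a (aStar i) with h | h
    · exact Eventually.of_forall (fun x hne => absurd h hne)
    · have hcont : ContinuousAt (fun x : ∀ j, A j → ℝ =>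
          payVec u i a x - payVec u i (aStar i) x) (purePt aStar) :=
        ((continuous_payVec u i a).sub (continuous_payVec u i (aStar i))).continuousAt
      have hval : payVec u i a (purePt aStar) - payVec u i (aStar i) (purePt aStar) < -c := by
        rw [payVec_pure, payVec_pure, Function.update_eq_self]
        have := hmargin i a h
        linarith
      have := hcont (Iio_mem_nhds hval)
      filter_upwards [this] with x hx _
      exact hx
  rw [Metric.eventually_nhds_iff] at hev
  obtain ⟨ε, hε, hball⟩ := hev
  refine ⟨ε / 2, by positivity, fun x hx i a ha => ?_⟩
  have hdist : dist x (purePt aStar) < ε := by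
    have : dist x (purePt aStar) ≤ ε / 2 := by
      rw [dist_pi_le_iff (by positivity)]
      intro j
      rw [dist_pi_le_iff (by positivity)]
      intro b
      rw [Real.dist_eq]
      exact hx j b
    linarith
  exact le_of_lt (hball hdist i a ha)

section logitlem
variable {α : Type*} [Fintype α] (y : α → ℝ)

lemma sum_exp_pos [Nonempty α] : 0 < ∑ b, Real.exp (y b) :=
  Finset.sum_pos (fun b _ => Real.exp_pos _) Finset.univ_nonempty

lemma logit_nonneg [Nonempty α] (a : α) : 0 ≤ logit y a :=
  div_nonneg (Real.exp_pos _).le (sum_exp_pos y).le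

lemma exp_le_sum (a : α) : Real.exp (y a) ≤ ∑ b, Real.exp (y b) :=
  Finset.single_le_sum (fun b _ => (Real.exp_pos (y b)).le) (Finset.mem_univ a)

lemma logit_le_one [Nonempty α] (a : α) : logit y a ≤ 1 := by
  rw [logit, div_le_one (sum_exp_pos y)]
  exact exp_le_sum y a

lemma logit_le_exp_sub (a astar : α) : logit y a ≤ Real.exp (y a - y astar) := by
  have : Nonempty α := ⟨astar⟩
  rw [logit, Real.exp_sub, div_le_div_iff₀ (sum_exp_pos y) (Real.exp_pos _)]
  exact mul_le_mul_of_nonneg_left (exp_le_sum y astar) (Real.exp_pos _).le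

lemma one_sub_logit_le [DecidableEq α] (astar : α) :
    1 - logit y astar ≤ ∑ b ∈ Finset.univ.filter (· ≠ astar), Real.exp (y b - y astar) := by
  have : Nonempty α := ⟨astar⟩
  have hS := sum_exp_pos y
  have hsplit : (∑ b, Real.exp (y b)) =
      Real.exp (y astar) + ∑ b ∈ Finset.univ.filter (· ≠ astar), Real.exp (y b) := by
    rw [← Finset.sum_filter_add_sum_filter_not Finset.univ (· = astar)]
    congr 1
    rw [Finset.filter_eq']
    simp
  have h1 : 1 - logit y astar
      = (∑ b ∈ Finset.univ.filter (· ≠ astar), Real.exp (y b)) / (∑ b, Real.exp (y b)) := by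
    rw [logit, eq_div_iff hS.ne', sub_mul, one_mul, div_mul_cancel₀ _ hS.ne']
    rw [hsplit]; ring
  rw [h1]
  have h2 : (∑ b ∈ Finset.univ.filter (· ≠ astar), Real.exp (y b)) / (∑ b, Real.exp (y b))
      ≤ (∑ b ∈ Finset.univ.filter (· ≠ astar), Real.exp (y b)) / Real.exp (y astar) := by
    apply div_le_div_of_nonneg_left _ (Real.exp_pos _) (exp_le_sum y astar)
    exact Finset.sum_nonneg fun b _ => (Real.exp_pos _).le
  refine h2.trans ?_
  rw [Finset.sum_div]
  apply le_of_eq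
  exact Finset.sum_congr rfl fun b _ => by rw [Real.exp_sub]

end logitlem

lemma logit_close {N : ℕ} {A : Fin N → Type*} [∀ j, Fintype (A j)] [∀ j, Nonempty (A j)]
    [∀ j, DecidableEq (A j)] (aStar : ∀ i, A i) {δ M : ℝ}
    (hMexp : Real.exp (-M) ≤ δ)
    (hMcard : ∀ j : Fin N, (Fintype.card (A j) : ℝ) * Real.exp (-M) ≤ δ)
    (w : ∀ i, A i → ℝ) (hw : ∀ i (a : A i), a ≠ aStar i → w i a - w i (aStar i) ≤ -M) :
    ∀ j b, |logit (w j) b - purePt aStar j b| ≤ δ := by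
  intro j b
  by_cases hb : b = aStar j
  · have h1 : logit (w j) b ≤ 1 := logit_le_one _ _
    have h0 : purePt aStar j b = 1 := by simp [purePt, hb]
    rw [h0, abs_sub_comm, abs_of_nonneg (by linarith), hb]
    calc 1 - logit (w j) (aStar j)
        ≤ ∑ b' ∈ Finset.univ.filter (· ≠ aStar j), Real.exp (w j b' - w j (aStar j)) :=
          one_sub_logit_le _ (aStar j)
      _ ≤ ∑ _b' ∈ Finset.univ.filter (· ≠ aStar j), Real.exp (-M) := by
          apply Finset.sum_le_sum
          intro b' hb'
          exact Real.exp_le_exp.2 (hw j b' (Finset.mem_filter.1 hb').2)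
      _ = ((Finset.univ.filter (· ≠ aStar j)).card : ℝ) * Real.exp (-M) := by
          rw [Finset.sum_const, nsmul_eq_mul]
      _ ≤ (Fintype.card (A j) : ℝ) * Real.exp (-M) := by
          apply mul_le_mul_of_nonneg_right _ (Real.exp_pos _).le
          exact_mod_cast Finset.card_filter_le _ _
      _ ≤ δ := hMcard j
  · have h0 : purePt aStar j b = 0 := by simp [purePt, hb]
    rw [h0, sub_zero, abs_of_nonneg (logit_nonneg _ _)]
    calc logit (w j) b ≤ Real.exp (w j b - w j (aStar j)) := logit_le_exp_sub _ _ _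
      _ ≤ Real.exp (-M) := Real.exp_le_exp.2 (hw j b hb)
      _ ≤ δ := hMexp

lemma le_start_of_deriv_nonpos {f f' : ℝ → ℝ} {t₀ t : ℝ} (ht : t₀ ≤ t)
    (hd : ∀ s ∈ Set.Icc t₀ t, HasDerivAt f (f' s) s)
    (hneg : ∀ s ∈ Set.Icc t₀ t, f' s ≤ 0) : f t ≤ f t₀ := by
  have hanti : AntitoneOn f (Set.Icc t₀ t) := by
    apply antitoneOn_of_deriv_nonpos (convex_Icc t₀ t)
    · exact fun s hs => (hd s hs).continuousAt.continuousWithinAt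
    · intro s hs
      rw [interior_Icc] at hs
      exact ((hd s (Set.Ioo_subset_Icc_self hs)).differentiableAt).differentiableWithinAt
    · intro s hs
      rw [interior_Icc] at hs
      rw [(hd s (Set.Ioo_subset_Icc_self hs)).deriv]
      exact hneg s (Set.Ioo_subset_Icc_self hs)
  exact hanti (Set.left_mem_Icc.2 ht) (Set.right_mem_Icc.2 ht) ht

lemma ode_core {f g g' w : ℝ → ℝ} {r t₀ c T : ℝ} (hr : 0 ≤ r) (ht₀ : 0 < t₀)
    (hc : 0 ≤ c) (hT : t₀ ≤ T)
    (hdf : ∀ s ∈ Set.Icc t₀ T, HasDerivAt f (g s) s)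
    (hdg : ∀ s ∈ Set.Icc t₀ T, HasDerivAt g (g' s) s)
    (hode : ∀ s ∈ Set.Icc t₀ T, g' s = w s - (r / s) * g s)
    (hg0 : g t₀ = 0)
    (hw : ∀ s ∈ Set.Icc t₀ T, w s ≤ -c) :
    f T ≤ f t₀ - c * (T - t₀) ^ 2 / (2 * (r + 1)) := by
  have hr1 : (0:ℝ) < r + 1 := by linarith
  set h : ℝ → ℝ := fun s => s ^ r * g s + c * (s ^ (r+1) - t₀ ^ (r+1)) / (r+1) with hh
  have hdh : ∀ s ∈ Set.Icc t₀ T, HasDerivAt h (s ^ r * (w s + c)) s := by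
    intro s hs
    have hs0 : (0:ℝ) < s := lt_of_lt_of_le ht₀ hs.1
    have hp : HasDerivAt (fun u : ℝ => u ^ r) (r * s ^ (r-1)) s :=
      Real.hasDerivAt_rpow_const (Or.inl hs0.ne')
    have h1 : HasDerivAt (fun u : ℝ => u ^ r * g u) (r * s ^ (r-1) * g s + s ^ r * g' s) s :=
      hp.mul (hdg s hs)
    have hp1 : HasDerivAt (fun u : ℝ => u ^ (r+1)) ((r+1) * s ^ r) s := by
      have := Real.hasDerivAt_rpow_const (x := s) (p := r+1) (Or.inl hs0.ne')
      simpa using this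
    have h2 : HasDerivAt (fun u : ℝ => c * (u ^ (r+1) - t₀ ^ (r+1)) / (r+1))
        (c * ((r+1) * s ^ r) / (r+1)) s := ((hp1.sub_const _).const_mul c).div_const (r+1)
    have htot := h1.add h2
    have hcomp : r * s ^ (r-1) * g s + s ^ r * g' s + c * ((r+1) * s ^ r) / (r+1)
        = s ^ r * (w s + c) := by
      rw [hode s hs]
      have hsr : s ^ (r-1) = s ^ r / s := by
        rw [Real.rpow_sub hs0, Real.rpow_one]
      rw [hsr]
      field_simp
      ring
    rw [hcomp] at htot
    exact htot
  have hht₀ : h t₀ = 0 := by simp [hh, hg0]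
  have hhle : ∀ s ∈ Set.Icc t₀ T, h s ≤ 0 := by
    intro s hs
    rw [← hht₀]
    refine le_start_of_deriv_nonpos hs.1
      (fun v hv => hdh v (Set.Icc_subset_Icc_right hs.2 hv)) (fun v hv => ?_)
    have hv0 : (0:ℝ) < v := lt_of_lt_of_le ht₀ hv.1
    have hwv := hw v (Set.Icc_subset_Icc_right hs.2 hv)
    have : w v + c ≤ 0 := by linarith
    exact mul_nonpos_of_nonneg_of_nonpos (Real.rpow_nonneg hv0.le r) this
  have hgbd : ∀ s ∈ Set.Icc t₀ T, g s + c * (s - t₀) / (r+1) ≤ 0 := by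
    intro s hs
    have hs0 : (0:ℝ) < s := lt_of_lt_of_le ht₀ hs.1
    have hsr : (0:ℝ) < s ^ r := Real.rpow_pos_of_pos hs0 r
    have key1 : s ^ r * (s - t₀) ≤ s ^ (r+1) - t₀ ^ (r+1) := by
      have e1 : s ^ (r+1) = s ^ r * s := Real.rpow_add_one hs0.ne' r
      have e2 : t₀ ^ (r+1) = t₀ ^ r * t₀ := Real.rpow_add_one ht₀.ne' r
      have e3 : t₀ ^ r ≤ s ^ r := Real.rpow_le_rpow ht₀.le hs.1 hr
      have e4 : t₀ ^ r * t₀ ≤ s ^ r * t₀ := mul_le_mul_of_nonneg_right e3 ht₀.le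
      rw [e1, e2]
      nlinarith
    have hhs := hhle s hs
    rw [hh] at hhs
    have h5 : c / (r+1) * (s ^ r * (s - t₀)) ≤ c / (r+1) * (s ^ (r+1) - t₀ ^ (r+1)) :=
      mul_le_mul_of_nonneg_left key1 (by positivity)
    have h6 : s ^ r * (g s + c * (s - t₀) / (r+1)) ≤ 0 := by
      have heq : s ^ r * (g s + c * (s - t₀) / (r+1))
          = s ^ r * g s + c / (r+1) * (s ^ r * (s - t₀)) := by ring
      rw [heq]
      have heq2 : c / (r+1) * (s ^ (r+1) - t₀ ^ (r+1))
          = c * (s ^ (r+1) - t₀ ^ (r+1)) / (r+1) := by ring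
      nlinarith
    nlinarith
  set Φ : ℝ → ℝ := fun s => f s + c * (s - t₀) ^ 2 / (2*(r+1)) with hΦ
  have hdΦ : ∀ s ∈ Set.Icc t₀ T, HasDerivAt Φ (g s + c * (s - t₀) / (r+1)) s := by
    intro s hs
    have hsq : HasDerivAt (fun u : ℝ => (u - t₀) ^ 2) (2 * (s - t₀) ^ 1 * 1) s :=
      ((hasDerivAt_id s).sub_const t₀).pow 2
    have h2 : HasDerivAt (fun u : ℝ => c * (u - t₀) ^ 2 / (2*(r+1)))
        (c * (2 * (s - t₀) ^ 1 * 1) / (2*(r+1))) s := (hsq.const_mul c).div_const _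
    have htot := (hdf s hs).add h2
    have heq : g s + c * (2 * (s - t₀) ^ 1 * 1) / (2*(r+1)) = g s + c * (s - t₀) / (r+1) := by
      rw [pow_one]
      field_simp
    rw [heq] at htot
    exact htot
  have hfin := le_start_of_deriv_nonpos hT hdΦ hgbd
  rw [hΦ] at hfin
  simp only at hfin
  have h0 : c * (t₀ - t₀) ^ 2 / (2*(r+1)) = 0 := by simp
  linarith

/-- Superlinear convergence of the continuous-time FTXL dynamics with
vanishing friction `r/t` and logit best responses to a strict Nash equilibrium. -/
theorem ftxl_continuous_vanishing_friction
    {N : ℕ} {A : Fin N → Type*} [∀ j, Fintype (A j)] [∀ j, Nonempty (A j)]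
    [∀ j, DecidableEq (A j)]
    (u : ∀ _ : Fin N, (∀ j, A j) → ℝ) (aStar : ∀ i, A i)
    (hNE : ∀ (i : Fin N) (a : A i), a ≠ aStar i →
      u i (Function.update aStar i a) < u i aStar)
    (c : ℝ) (hc : 0 < c)
    (hmargin : IsLeast {d : ℝ | ∃ i : Fin N, ∃ a : A i, a ≠ aStar i ∧
      d = u i aStar - u i (Function.update aStar i a)} (2 * c))
    (r t₀ : ℝ) (hr : 0 ≤ r) (ht₀ : 0 < t₀) :
    ∃ M > (0 : ℝ), ∀ y y' y'' : ℝ → ∀ i, A i → ℝ,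
      (∀ t ≥ t₀, ∀ (i : Fin N) (a : A i), HasDerivAt (fun s => y s i a) (y' t i a) t) →
      (∀ t ≥ t₀, ∀ (i : Fin N) (a : A i), HasDerivAt (fun s => y' s i a) (y'' t i a) t) →
      (∀ t ≥ t₀, ∀ (i : Fin N) (a : A i),
        y'' t i a = payVec u i a (fun j => logit (y t j)) - (r / t) * y' t i a) →
      (∀ (i : Fin N) (a : A i), y' t₀ i a = 0) →
      (∀ (i : Fin N) (a : A i), a ≠ aStar i → y t₀ i a - y t₀ i (aStar i) < -M) →
      (∀ (i : Fin N) (a : A i),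
        Tendsto (fun t => logit (y t i) a) atTop
          (nhds (if a = aStar i then (1 : ℝ) else 0))) ∧
      ∃ C > (0 : ℝ), ∀ t ≥ t₀, ∀ (i : Fin N) (a : A i),
        |logit (y t i) a - (if a = aStar i then (1 : ℝ) else 0)| ≤
          Real.exp (C - c * (t - t₀) ^ 2 / (2 * (r + 1))) := by
  have hr1 : (0:ℝ) < r + 1 := by linarith
  obtain ⟨δ, hδ, hδprop⟩ := exists_delta u aStar c hc
    (fun i a ha => hmargin.2 ⟨i, a, ha, rfl⟩)
  set Ktot : ℝ := ∑ i, (Fintype.card (A i) : ℝ) with hKtot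
  have hKt : 0 ≤ Ktot := Finset.sum_nonneg fun i _ => Nat.cast_nonneg _
  set M : ℝ := 1 + |Real.log ((Ktot + 1) / δ)| with hMdef
  have hM0 : 0 < M := by positivity
  have hexpM : Real.exp (-M) ≤ δ / (Ktot + 1) := by
    have hq : (0:ℝ) < (Ktot + 1) / δ := by positivity
    have h1 : Real.log ((Ktot + 1) / δ) ≤ M := by
      rw [hMdef]
      have := le_abs_self (Real.log ((Ktot + 1) / δ))
      linarith
    calc Real.exp (-M) ≤ Real.exp (-(Real.log ((Ktot + 1) / δ))) :=
          Real.exp_le_exp.2 (by linarith)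
      _ = δ / (Ktot + 1) := by rw [Real.exp_neg, Real.exp_log hq, inv_div]
  have hMexp : Real.exp (-M) ≤ δ := by
    have : δ / (Ktot + 1) ≤ δ := by
      apply div_le_self hδ.le
      linarith
    linarith
  have hMcard : ∀ j : Fin N, (Fintype.card (A j) : ℝ) * Real.exp (-M) ≤ δ := by
    intro j
    have hcard : (Fintype.card (A j) : ℝ) ≤ Ktot := by
      rw [hKtot]
      exact Finset.single_le_sum (f := fun i => (Fintype.card (A i) : ℝ))
        (fun i _ => Nat.cast_nonneg _) (Finset.mem_univ j)
    have h1 : (Fintype.card (A j) : ℝ) * Real.exp (-M) ≤ (Ktot + 1) * (δ / (Ktot + 1)) := by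
      apply mul_le_mul (by linarith) hexpM (Real.exp_pos _).le (by linarith)
    rwa [mul_div_cancel₀ _ (by linarith : (Ktot + 1) ≠ 0)] at h1
  refine ⟨M, hM0, fun y y' y'' hdy hdy' hode hy'0 hinit => ?_⟩
  -- payoff estimate when all differences are ≤ -M
  have hpay : ∀ t, t₀ ≤ t → (∀ i (a : A i), a ≠ aStar i →
      y t i a - y t i (aStar i) ≤ -M) → ∀ i (a : A i), a ≠ aStar i →
      payVec u i a (fun j => logit (y t j))
        - payVec u i (aStar i) (fun j => logit (y t j)) ≤ -c := by
    intro t ht hz i a ha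
    exact hδprop _ (logit_close aStar hMexp hMcard (y t) hz) i a ha
  have hzc : ∀ t, t₀ ≤ t → ∀ i (a : A i),
      ContinuousAt (fun s => y s i a - y s i (aStar i)) t :=
    fun t ht i a => ((hdy t ht i a).sub (hdy t ht i (aStar i))).continuousAt
  -- core estimate
  have hcore : ∀ T, t₀ ≤ T → (∀ s ∈ Set.Icc t₀ T, ∀ i (a : A i), a ≠ aStar i →
        y s i a - y s i (aStar i) ≤ -M) →
      ∀ i (a : A i), a ≠ aStar i →
        y T i a - y T i (aStar i)
          ≤ (y t₀ i a - y t₀ i (aStar i)) - c * (T - t₀) ^ 2 / (2 * (r + 1)) := by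
    intro T hT hsmall i a ha
    refine ode_core (f := fun s => y s i a - y s i (aStar i))
      (g := fun s => y' s i a - y' s i (aStar i))
      (g' := fun s => y'' s i a - y'' s i (aStar i))
      (w := fun s => payVec u i a (fun j => logit (y s j))
        - payVec u i (aStar i) (fun j => logit (y s j)))
      hr ht₀ hc.le hT ?_ ?_ ?_ ?_ ?_
    · exact fun s hs => (hdy s hs.1 i a).sub (hdy s hs.1 i (aStar i))
    · exact fun s hs => (hdy' s hs.1 i a).sub (hdy' s hs.1 i (aStar i))
    · intro s hs
      show y'' s i a - y'' s i (aStar i) = _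
      rw [hode s hs.1 i a, hode s hs.1 i (aStar i)]
      ring
    · show y' t₀ i a - y' t₀ i (aStar i) = 0
      rw [hy'0, hy'0]; ring
    · intro s hs
      exact hpay s hs.1 (fun i' a' ha' => hsmall s hs i' a' ha') i a ha
  -- bootstrap
  have hQ : ∀ t, t₀ ≤ t → ∀ i (a : A i), a ≠ aStar i →
      y t i a - y t i (aStar i) < -M := by
    by_contra hcon
    push_neg at hcon
    obtain ⟨t₁, ht₁, i₁, a₁, ha₁, hge₁⟩ := hcon
    set F : Set ℝ := {t | t₀ ≤ t ∧ ∃ i, ∃ a : A i, a ≠ aStar i ∧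
      -M ≤ y t i a - y t i (aStar i)} with hF
    have hFne : F.Nonempty := ⟨t₁, ht₁, i₁, a₁, ha₁, hge₁⟩
    have hbdd : BddBelow F := ⟨t₀, fun f hf => hf.1⟩
    set T := sInf F with hTdef
    have hT₀ : t₀ ≤ T := le_csInf hFne fun f hf => hf.1
    have hQlt : ∀ s, t₀ ≤ s → s < T → ∀ i (a : A i), a ≠ aStar i →
        y s i a - y s i (aStar i) < -M := by
      intro s hs hsT i a ha
      by_contra h
      push_neg at h
      exact absurd (csInf_le hbdd ⟨hs, i, a, ha, h⟩) (not_le.2 hsT)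
    have hev : ∀ t, t₀ ≤ t → (∀ i (a : A i), a ≠ aStar i →
        y t i a - y t i (aStar i) < -M) →
        ∃ ε > (0:ℝ), ∀ s, |s - t| < ε → ∀ i (a : A i), a ≠ aStar i →
          y s i a - y s i (aStar i) < -M := by
      intro t ht hQt
      have hevn : ∀ᶠ s in nhds t, ∀ i (a : A i), a ≠ aStar i →
          y s i a - y s i (aStar i) < -M := by
        rw [eventually_all]
        intro i
        rw [eventually_all]
        intro a
        rcases eq_or_ne a (aStar i) with h | h
        · exact Eventually.of_forall fun s hne => absurd h hne
        · have := (hzc t ht i a) (Iio_mem_nhds (hQt i a h))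
          filter_upwards [this] with s hs _
          exact hs
      rw [Metric.eventually_nhds_iff] at hevn
      obtain ⟨ε, hε, hball⟩ := hevn
      exact ⟨ε, hε, fun s hs => hball (by rwa [Real.dist_eq])⟩
    have hTgt : t₀ < T := by
      obtain ⟨ε, hε, hball⟩ := hev t₀ le_rfl hinit
      have hle : t₀ + ε / 2 ≤ T := by
        apply le_csInf hFne
        intro f hf
        by_contra hlt
        push_neg at hlt
        have habs : |f - t₀| < ε := by
          rw [abs_lt]
          constructor
          · linarith [hf.1]
          · linarith
        obtain ⟨i, a, ha, hge⟩ := hf.2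
        exact absurd hge (not_le.2 (hball f habs i a ha))
      linarith
    have hQTle : ∀ i (a : A i), a ≠ aStar i → y T i a - y T i (aStar i) ≤ -M := by
      intro i a ha
      have htd : Tendsto (fun s => y s i a - y s i (aStar i)) (nhdsWithin T (Set.Iio T))
          (nhds (y T i a - y T i (aStar i))) :=
        ((hzc T hT₀ i a)).tendsto.mono_left nhdsWithin_le_nhds
      refine le_of_tendsto htd ?_
      have hmem : Set.Ioo t₀ T ∈ nhdsWithin T (Set.Iio T) :=
        Ioo_mem_nhdsLT_of_mem ⟨hTgt, le_refl T⟩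
      filter_upwards [hmem] with s hs
      exact (hQlt s hs.1.le hs.2 i a ha).le
    have hsmall : ∀ s ∈ Set.Icc t₀ T, ∀ i (a : A i), a ≠ aStar i →
        y s i a - y s i (aStar i) ≤ -M := by
      intro s hs i a ha
      rcases eq_or_lt_of_le hs.2 with h | h
      · subst h
        exact hQTle i a ha
      · exact (hQlt s hs.1 h i a ha).le
    have hQT : ∀ i (a : A i), a ≠ aStar i → y T i a - y T i (aStar i) < -M := by
      intro i a ha
      have h1 := hcore T hT₀ hsmall i a ha
      have hnn : 0 ≤ c * (T - t₀) ^ 2 / (2 * (r + 1)) :=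
        div_nonneg (by positivity) (by linarith)
      have h2 := hinit i a ha
      linarith
    obtain ⟨ε, hε, hball⟩ := hev T hT₀ hQT
    have hcontr : T + ε / 2 ≤ T := by
      apply le_csInf hFne
      intro f hf
      have hfT : T ≤ f := csInf_le hbdd hf
      by_contra hlt
      push_neg at hlt
      have habs : |f - T| < ε := by
        rw [abs_lt]
        constructor
        · linarith
        · linarith
      obtain ⟨i, a, ha, hge⟩ := hf.2
      exact absurd hge (not_le.2 (hball f habs i a ha))
    linarith
  -- final quantitative estimate for the differences
  have hfinal : ∀ t, t₀ ≤ t → ∀ i (a : A i), a ≠ aStar i →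
      y t i a - y t i (aStar i)
        ≤ (y t₀ i a - y t₀ i (aStar i)) - c * (t - t₀) ^ 2 / (2 * (r + 1)) := by
    intro t ht
    exact hcore t ht (fun s hs i a ha => (hQ s hs.1 i a ha).le)
  set S : ℝ := ∑ i, ∑ a ∈ Finset.univ.filter (· ≠ aStar i),
    Real.exp (y t₀ i a - y t₀ i (aStar i)) with hSdef
  have hS0 : 0 ≤ S :=
    Finset.sum_nonneg fun i _ => Finset.sum_nonneg fun a _ => (Real.exp_pos _).le
  set C : ℝ := 1 + Real.log (1 + S) with hCdef
  have hC0 : 0 < C := by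
    have : 0 ≤ Real.log (1 + S) := Real.log_nonneg (by linarith)
    linarith
  have hexpC : 1 + S ≤ Real.exp C := by
    rw [hCdef, Real.exp_add, Real.exp_log (by linarith)]
    have h1 : (1:ℝ) ≤ Real.exp 1 := by
      have := Real.add_one_le_exp (1:ℝ)
      linarith
    nlinarith
  -- individual initial terms are ≤ exp C
  have hterm : ∀ i (a : A i), a ≠ aStar i →
      Real.exp (y t₀ i a - y t₀ i (aStar i)) ≤ Real.exp C := by
    intro i a ha
    have h1 : Real.exp (y t₀ i a - y t₀ i (aStar i))
        ≤ ∑ a' ∈ Finset.univ.filter (· ≠ aStar i),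
            Real.exp (y t₀ i a' - y t₀ i (aStar i)) := by
      exact Finset.single_le_sum (f := fun a' => Real.exp (y t₀ i a' - y t₀ i (aStar i)))
        (fun a' _ => (Real.exp_pos _).le) (Finset.mem_filter.2 ⟨Finset.mem_univ a, ha⟩)
    have h2 : ∑ a' ∈ Finset.univ.filter (· ≠ aStar i),
        Real.exp (y t₀ i a' - y t₀ i (aStar i)) ≤ S := by
      rw [hSdef]
      apply Finset.single_le_sum
        (fun i' _ => Finset.sum_nonneg fun a' _ => (Real.exp_pos _).le) (Finset.mem_univ i)
    linarith
  have hinnerS : ∀ i : Fin N, ∑ a' ∈ Finset.univ.filter (· ≠ aStar i),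
      Real.exp (y t₀ i a' - y t₀ i (aStar i)) ≤ Real.exp C := by
    intro i
    have h2 : ∑ a' ∈ Finset.univ.filter (· ≠ aStar i),
        Real.exp (y t₀ i a' - y t₀ i (aStar i)) ≤ S := by
      rw [hSdef]
      apply Finset.single_le_sum
        (fun i' _ => Finset.sum_nonneg fun a' _ => (Real.exp_pos _).le) (Finset.mem_univ i)
    linarith
  -- the main pointwise bound
  have hbound : ∀ t, t₀ ≤ t → ∀ i (a : A i),
      |logit (y t i) a - (if a = aStar i then (1:ℝ) else 0)| ≤
        Real.exp (C - c * (t - t₀) ^ 2 / (2 * (r + 1))) := by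
    intro t ht i a
    set q : ℝ := c * (t - t₀) ^ 2 / (2 * (r + 1)) with hq
    by_cases hb : a = aStar i
    · rw [if_pos hb]
      have h1 : logit (y t i) a ≤ 1 := logit_le_one _ _
      rw [abs_sub_comm, abs_of_nonneg (by linarith), hb]
      calc 1 - logit (y t i) (aStar i)
          ≤ ∑ b ∈ Finset.univ.filter (· ≠ aStar i),
              Real.exp (y t i b - y t i (aStar i)) :=
            one_sub_logit_le _ (aStar i)
        _ ≤ ∑ b ∈ Finset.univ.filter (· ≠ aStar i),
              Real.exp ((y t₀ i b - y t₀ i (aStar i)) - q) := by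
            apply Finset.sum_le_sum
            intro b hbmem
            exact Real.exp_le_exp.2 (hfinal t ht i b (Finset.mem_filter.1 hbmem).2)
        _ = (∑ b ∈ Finset.univ.filter (· ≠ aStar i),
              Real.exp (y t₀ i b - y t₀ i (aStar i)))
              * Real.exp (-q) := by
            rw [Finset.sum_mul]
            apply Finset.sum_congr rfl
            intro b _
            rw [← Real.exp_add]
            ring_nf
        _ ≤ Real.exp C * Real.exp (-q) :=
            mul_le_mul_of_nonneg_right (hinnerS i) (Real.exp_pos _).le
        _ = Real.exp (C - q) := by rw [← Real.exp_add]; ring_nf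
    · rw [if_neg hb, sub_zero, abs_of_nonneg (logit_nonneg _ _)]
      calc logit (y t i) a ≤ Real.exp (y t i a - y t i (aStar i)) := logit_le_exp_sub _ _ _
        _ ≤ Real.exp ((y t₀ i a - y t₀ i (aStar i)) - q) :=
            Real.exp_le_exp.2 (hfinal t ht i a hb)
        _ = Real.exp (y t₀ i a - y t₀ i (aStar i)) * Real.exp (-q) := by
            rw [← Real.exp_add]; ring_nf
        _ ≤ Real.exp C * Real.exp (-q) :=
            mul_le_mul_of_nonneg_right (hterm i a hb) (Real.exp_pos _).le
        _ = Real.exp (C - q) := by rw [← Real.exp_add]; ring_nf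
  constructor
  · intro i a
    rw [← tendsto_sub_nhds_zero_iff]
    apply squeeze_zero_norm' (a := fun t => Real.exp (C - c * (t - t₀) ^ 2 / (2 * (r + 1))))
    · filter_upwards [eventually_ge_atTop t₀] with t ht
      rw [Real.norm_eq_abs]
      exact hbound t ht i a
    · have hq1 : Tendsto (fun t : ℝ => c * (t - t₀) ^ 2 / (2 * (r + 1))) atTop atTop := by
        apply Tendsto.atTop_div_const (by linarith)
        apply Tendsto.const_mul_atTop hc
        have h1 : Tendsto (fun t : ℝ => t - t₀) atTop atTop :=
          tendsto_atTop_add_const_right _ _ tendsto_id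
        exact (tendsto_pow_atTop two_ne_zero).comp h1
      have hq2 : Tendsto (fun t : ℝ => C - c * (t - t₀) ^ 2 / (2 * (r + 1))) atTop atBot := by
        have h1 : Tendsto (fun t : ℝ => -(c * (t - t₀) ^ 2 / (2 * (r + 1)))) atTop atBot :=
          tendsto_neg_atTop_atBot.comp hq1
        have h2 := tendsto_atBot_add_const_left atTop C h1
        simpa [sub_eq_add_neg] using h2
      exact Real.tendsto_exp_atBot.comp hq2
  · exact ⟨C, hC0, fun t ht i a => hbound t ht i a⟩
end

section
/- Let A be a finite nonempty set, a* ∈ A, and let θ : [0,1] → ℝ be continuous on [0,1], twice differentiable on (0,1] with θ''(x) > 0 for all x ∈ (0,1], and θ'(x) → −∞ as x → 0⁺; let ψ : (−∞, θ'(1)] → (0,1] denote the inverse of the strictly increasing map θ' : (0,1] → (−∞, θ'(1)]. For each n, let y_n ∈ ℝ^A and let x_n be a maximizer over the simplex Δ(A) = {x : A → ℝ : x(a) ≥ 0, Σ_a x(a) = 1} of the function x ↦ Σ_a y_n(a)·x(a) − Σ_a θ(x(a)). If y_n(a) − y_n(a*) → −∞ as n → ∞ for every a ≠ a*, then x_n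 converges to the point mass e_{a*} at a*; moreover, for every n with y_n(a) ≤ y_n(a*) for all a ≠ a*, one has max_a |x_n(a) − e_{a*}(a)| ≤ Σ_{a ≠ a*} ψ(θ'(1) + y_n(a) − y_n(a*)). -/
/-!
Moving mass `ε` from a coordinate `a` to `a*` must not increase the regularized payoff of a
maximizer `x`. By the mean value theorem and strict monotonicity of `θ'` this gives
`θ'(s) < θ'(1) + y(a) - y(a*)` for every `0 < s < x(a)`, hence `x(a) ≤ ψ(θ'(1) + y(a) - y(a*))`.
The distance from `x` to `e_{a*}` is at most `∑_{a ≠ a*} x(a)`, and `ψ(z) → 0` as `z → -∞`.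
-/

open Filter Set Function Topology

namespace MirrorMap

variable {α : Type*} [Fintype α]

def regularizedPayoff (θ : ℝ → ℝ) (y z : α → ℝ) : ℝ :=
  ∑ a, y a * z a - ∑ a, θ (z a)

section DecidableEq

variable [DecidableEq α]

lemma add_le_one_of_mem_stdSimplex {x : α → ℝ} (hx : x ∈ stdSimplex ℝ α) {a b : α}
    (hab : a ≠ b) : x a + x b ≤ 1 := by
  rw [← hx.2, ← Finset.sum_pair hab]
  exact Finset.sum_le_sum_of_subset_of_nonneg (Finset.subset_univ _) fun c _ _ => hx.1 c

lemma sum_apply_update (g : α → ℝ → ℝ) (z : α → ℝ) (i : α) (v : ℝ) :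
    ∑ c, g c (update z i v c) = ∑ c, g c (z c) + (g i v - g i (z i)) := by
  simp_rw [apply_update g z i v]
  rw [Finset.sum_update_of_mem (Finset.mem_univ i),
    Finset.sum_eq_add_sum_sdiff_singleton_of_mem (Finset.mem_univ i)]
  ring

lemma regularizedPayoff_update (θ : ℝ → ℝ) (y z : α → ℝ) (i : α) (v : ℝ) :
    regularizedPayoff θ y (update z i v) =
      regularizedPayoff θ y z + ((y i * v - θ v) - (y i * z i - θ (z i))) := by
  unfold regularizedPayoff
  rw [sum_apply_update (fun c t => y c * t), sum_apply_update (fun _ t => θ t)]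
  ring

lemma exchange_le_of_isMaxOn {θ : ℝ → ℝ} {y x : α → ℝ} (hxS : x ∈ stdSimplex ℝ α)
    (hmax : IsMaxOn (regularizedPayoff θ y) (stdSimplex ℝ α) x) {a b : α} (hab : a ≠ b)
    {ε : ℝ} (hε : 0 ≤ ε) (hεx : ε ≤ x a) :
    ε * (y b - y a) ≤ (θ (x b + ε) - θ (x b)) - (θ (x a) - θ (x a - ε)) := by
  set z := update (update x a (x a - ε)) b (x b + ε)
  have hzS : z ∈ stdSimplex ℝ α := by
    refine ⟨fun c => ?_, ?_⟩
    · simp only [z, update_apply]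
      split_ifs <;> linarith [hxS.1 b, hxS.1 c]
    · rw [sum_apply_update (fun _ t => t), sum_apply_update (fun _ t => t), hxS.2,
        update_of_ne hab.symm]
      ring
  have hle := isMaxOn_iff.1 hmax z hzS
  rw [regularizedPayoff_update, regularizedPayoff_update, update_of_ne hab.symm] at hle
  linarith

lemma abs_sub_single_le_sum_erase {x : α → ℝ} (hx : x ∈ stdSimplex ℝ α) (i j : α) :
    |x j - (Pi.single i 1 : α → ℝ) j| ≤ ∑ c ∈ Finset.univ.erase i, x c := by
  have hsum := Finset.sum_erase_add Finset.univ x (Finset.mem_univ i)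
  rw [hx.2] at hsum
  rcases eq_or_ne j i with rfl | hji
  · have hrest : 0 ≤ ∑ c ∈ Finset.univ.erase j, x c := Finset.sum_nonneg fun c _ => hx.1 c
    rw [Pi.single_eq_same, abs_of_nonpos (by linarith)]
    linarith
  · rw [Pi.single_eq_of_ne hji, sub_zero, abs_of_nonneg (hx.1 j)]
    exact Finset.single_le_sum (fun c _ => hx.1 c) (Finset.mem_erase.2 ⟨hji, Finset.mem_univ j⟩)

end DecidableEq

lemma strictMonoOn_Ioc_of_hasDerivWithinAt_pos {f f' : ℝ → ℝ} {p q : ℝ}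
    (hf : ∀ t ∈ Ioc p q, HasDerivWithinAt f (f' t) (Ioc p q) t)
    (hpos : ∀ t ∈ Ioc p q, 0 < f' t) : StrictMonoOn f (Ioc p q) := by
  refine strictMonoOn_of_hasDerivWithinAt_pos (convex_Ioc p q)
    (fun t ht => (hf t ht).continuousWithinAt) (fun t ht => ?_)
    (fun t ht => hpos t (interior_subset ht))
  rw [interior_Ioc] at ht ⊢
  exact (hf t (Ioo_subset_Ioc_self ht)).mono Ioo_subset_Ioc_self

section Kernel

variable {θ θ' : ℝ → ℝ} {p q u v : ℝ}

lemma exists_sub_eq_mul_deriv (hθc : ContinuousOn θ (Icc p q))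
    (hd : ∀ t ∈ Ioc p q, HasDerivWithinAt θ (θ' t) (Ioc p q) t)
    (hu : p ≤ u) (huv : u < v) (hv : v ≤ q) :
    ∃ c ∈ Ioo u v, θ v - θ u = (v - u) * θ' c := by
  obtain ⟨c, hc, hslope⟩ := exists_hasDerivAt_eq_slope θ θ' huv
    (hθc.mono (Icc_subset_Icc hu hv))
    fun t ht => (hd t ⟨hu.trans_lt ht.1, (ht.2.trans_le hv).le⟩).hasDerivAt
      (Ioc_mem_nhds (hu.trans_lt ht.1) (ht.2.trans_le hv))
  refine ⟨c, hc, ?_⟩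
  rw [hslope]
  field_simp [(sub_pos.2 huv).ne']

lemma mul_deriv_lt_sub (hθc : ContinuousOn θ (Icc p q))
    (hd : ∀ t ∈ Ioc p q, HasDerivWithinAt θ (θ' t) (Ioc p q) t)
    (hmono : StrictMonoOn θ' (Ioc p q)) (hu : p < u) (huv : u < v) (hv : v ≤ q) :
    (v - u) * θ' u < θ v - θ u := by
  obtain ⟨c, hc, heq⟩ := exists_sub_eq_mul_deriv hθc hd hu.le huv hv
  rw [heq]
  exact mul_lt_mul_of_pos_left
    (hmono ⟨hu, huv.le.trans hv⟩ ⟨hu.trans hc.1, (hc.2.trans_le hv).le⟩ hc.1) (sub_pos.2 huv)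

lemma sub_le_mul_deriv (hθc : ContinuousOn θ (Icc p q))
    (hd : ∀ t ∈ Ioc p q, HasDerivWithinAt θ (θ' t) (Ioc p q) t)
    (hmono : StrictMonoOn θ' (Ioc p q)) (hu : p ≤ u) (huv : u < v) (hv : v ≤ q) :
    θ v - θ u ≤ (v - u) * θ' v := by
  obtain ⟨c, hc, heq⟩ := exists_sub_eq_mul_deriv hθc hd hu huv hv
  rw [heq]
  exact mul_le_mul_of_nonneg_left
    (hmono.monotoneOn ⟨hu.trans_lt hc.1, (hc.2.trans_le hv).le⟩ ⟨hu.trans_lt huv, hv⟩ hc.2.le)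
    (sub_pos.2 huv).le

lemma tendsto_atBot_zero_of_rightInvOn {ψ : ℝ → ℝ} (hmono : StrictMonoOn θ' (Ioc 0 1))
    (hψ : ∀ z ≤ θ' 1, ψ z ∈ Ioc (0 : ℝ) 1 ∧ θ' (ψ z) = z) : Tendsto ψ atBot (𝓝 0) := by
  refine tendsto_order.2 ⟨fun l hl => ?_, fun r hr => ?_⟩
  · filter_upwards [eventually_le_atBot (θ' 1)] with z hz using hl.trans (hψ z hz).1.1
  · set δ := min (r / 2) 1
    have hδ : δ ∈ Ioc (0 : ℝ) 1 := ⟨lt_min (half_pos hr) one_pos, min_le_right _ _⟩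
    filter_upwards [eventually_le_atBot (θ' δ)] with z hz
    obtain ⟨hmem, heq⟩ := hψ z (hz.trans (hmono.monotoneOn hδ ⟨one_pos, le_rfl⟩ hδ.2))
    calc ψ z ≤ δ := (hmono.le_iff_le hmem hδ).1 (by rwa [heq])
      _ ≤ r / 2 := min_le_left _ _
      _ < r := half_lt_self hr

variable [DecidableEq α] {y x : α → ℝ} {a b : α}

lemma deriv_lt_of_isMaxOn (hθc : ContinuousOn θ (Icc 0 1))
    (hd : ∀ t ∈ Ioc (0 : ℝ) 1, HasDerivWithinAt θ (θ' t) (Ioc 0 1) t)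
    (hmono : StrictMonoOn θ' (Ioc 0 1)) (hxS : x ∈ stdSimplex ℝ α)
    (hmax : IsMaxOn (regularizedPayoff θ y) (stdSimplex ℝ α) x) (hab : a ≠ b) {s : ℝ}
    (hs : 0 < s) (hsx : s < x a) : θ' s < θ' 1 + (y a - y b) := by
  set ε := x a - s
  have hε : 0 < ε := sub_pos.2 hsx
  have hab1 := add_le_one_of_mem_stdSimplex hxS hab
  have hxb : x b + ε ≤ 1 := by linarith
  have hexch := exchange_le_of_isMaxOn hxS hmax hab hε.le (sub_le_self _ hs.le)
  have hgain := mul_deriv_lt_sub hθc hd hmono hs hsx (by linarith [hxS.1 b])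
  have hloss := sub_le_mul_deriv hθc hd hmono (hxS.1 b) (lt_add_of_pos_right _ hε) hxb
  have hθ'1 : θ' (x b + ε) ≤ θ' 1 :=
    hmono.monotoneOn ⟨by linarith [hxS.1 b], hxb⟩ ⟨one_pos, le_rfl⟩ hxb
  rw [sub_sub_cancel] at hexch
  rw [add_sub_cancel_left] at hloss
  refine lt_of_mul_lt_mul_left ?_ hε.le
  calc ε * θ' s < θ (x a) - θ s := hgain
    _ ≤ θ (x b + ε) - θ (x b) - ε * (y b - y a) := by linarith
    _ ≤ ε * θ' 1 - ε * (y b - y a) := by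
      linarith [mul_le_mul_of_nonneg_left hθ'1 hε.le]
    _ = ε * (θ' 1 + (y a - y b)) := by ring

lemma le_rightInv_of_isMaxOn {ψ : ℝ → ℝ} (hθc : ContinuousOn θ (Icc 0 1))
    (hd : ∀ t ∈ Ioc (0 : ℝ) 1, HasDerivWithinAt θ (θ' t) (Ioc 0 1) t)
    (hmono : StrictMonoOn θ' (Ioc 0 1))
    (hψ : ∀ z ≤ θ' 1, ψ z ∈ Ioc (0 : ℝ) 1 ∧ θ' (ψ z) = z) (hxS : x ∈ stdSimplex ℝ α)
    (hmax : IsMaxOn (regularizedPayoff θ y) (stdSimplex ℝ α) x) (hab : a ≠ b)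
    (hy : y a ≤ y b) : x a ≤ ψ (θ' 1 + y a - y b) := by
  obtain ⟨hmem, heq⟩ := hψ (θ' 1 + y a - y b) (by linarith)
  by_contra! h
  have := deriv_lt_of_isMaxOn hθc hd hmono hxS hmax hab hmem.1 h
  rw [heq] at this
  linarith

lemma abs_sub_single_le_of_isMaxOn {ψ : ℝ → ℝ} (hθc : ContinuousOn θ (Icc 0 1))
    (hd : ∀ t ∈ Ioc (0 : ℝ) 1, HasDerivWithinAt θ (θ' t) (Ioc 0 1) t)
    (hmono : StrictMonoOn θ' (Ioc 0 1))
    (hψ : ∀ z ≤ θ' 1, ψ z ∈ Ioc (0 : ℝ) 1 ∧ θ' (ψ z) = z) (hxS : x ∈ stdSimplex ℝ α)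
    (hmax : IsMaxOn (regularizedPayoff θ y) (stdSimplex ℝ α) x)
    (hy : ∀ a, a ≠ b → y a ≤ y b) (j : α) :
    |x j - (Pi.single b 1 : α → ℝ) j| ≤ ∑ a ∈ Finset.univ.erase b, ψ (θ' 1 + y a - y b) := by
  refine (abs_sub_single_le_sum_erase hxS b j).trans (Finset.sum_le_sum fun a ha => ?_)
  have hab := Finset.ne_of_mem_erase ha
  exact le_rightInv_of_isMaxOn hθc hd hmono hψ hxS hmax hab (hy a hab)

end Kernel

end MirrorMap

open MirrorMap

theorem mirror_map_convergence_general
    {α : Type*} [Fintype α] [DecidableEq α] (aStar : α)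
    (θ θ' θ'' ψ : ℝ → ℝ)
    (hθc : ContinuousOn θ (Set.Icc 0 1))
    (hd1 : ∀ x ∈ Set.Ioc (0 : ℝ) 1, HasDerivWithinAt θ (θ' x) (Set.Ioc 0 1) x)
    (hd2 : ∀ x ∈ Set.Ioc (0 : ℝ) 1, HasDerivWithinAt θ' (θ'' x) (Set.Ioc 0 1) x)
    (hconv : ∀ x ∈ Set.Ioc (0 : ℝ) 1, 0 < θ'' x)
    (hψright : ∀ z ≤ θ' 1, ψ z ∈ Set.Ioc (0 : ℝ) 1 ∧ θ' (ψ z) = z)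
    (y x : ℕ → α → ℝ)
    (hx : ∀ n, (∀ a, 0 ≤ x n a) ∧ (∑ a, x n a) = 1 ∧
      ∀ z : α → ℝ, (∀ a, 0 ≤ z a) → (∑ a, z a) = 1 →
        (∑ a, y n a * z a) - ∑ a, θ (z a) ≤ (∑ a, y n a * x n a) - ∑ a, θ (x n a))
    (hy : ∀ a, a ≠ aStar → Tendsto (fun n => y n a - y n aStar) atTop atBot) :
    (∀ a, Tendsto (fun n => x n a) atTop (nhds (if a = aStar then (1 : ℝ) else 0))) ∧
    ∀ n, (∀ a, a ≠ aStar → y n a ≤ y n aStar) →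
      ∀ a, |x n a - (if a = aStar then (1 : ℝ) else 0)| ≤
        ∑ a' ∈ Finset.univ.erase aStar, ψ (θ' 1 + y n a' - y n aStar) := by
  have hmono := strictMonoOn_Ioc_of_hasDerivWithinAt_pos hd2 hconv
  have hxS n : x n ∈ stdSimplex ℝ α := ⟨(hx n).1, (hx n).2.1⟩
  have hmax n : IsMaxOn (regularizedPayoff θ (y n)) (stdSimplex ℝ α) (x n) :=
    fun z hz => (hx n).2.2 z hz.1 hz.2
  have hbound : ∀ n, (∀ a, a ≠ aStar → y n a ≤ y n aStar) →
      ∀ a, |x n a - (if a = aStar then (1 : ℝ) else 0)| ≤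
        ∑ a' ∈ Finset.univ.erase aStar, ψ (θ' 1 + y n a' - y n aStar) := fun n hyn a => by
    simpa only [Pi.single_apply] using
      abs_sub_single_le_of_isMaxOn hθc hd1 hmono hψright (hxS n) (hmax n) hyn a
  refine ⟨fun a => ?_, hbound⟩
  have hdom : ∀ᶠ n in atTop, ∀ c, c ≠ aStar → y n c ≤ y n aStar := by
    refine eventually_all.2 fun c => ?_
    rcases eq_or_ne c aStar with rfl | hc
    · exact Eventually.of_forall fun _ h => absurd rfl h
    · filter_upwards [(hy c hc).eventually (eventually_le_atBot 0)] with n hn _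
      exact sub_nonpos.1 hn
  have hsum : Tendsto (fun n => ∑ c ∈ Finset.univ.erase aStar, ψ (θ' 1 + y n c - y n aStar))
      atTop (𝓝 0) := by
    simp_rw [add_sub_assoc]
    have := tendsto_finsetSum (Finset.univ.erase aStar) fun c hc =>
      (tendsto_atBot_zero_of_rightInvOn hmono hψright).comp
        (tendsto_atBot_add_const_left _ (θ' 1) (hy c (Finset.ne_of_mem_erase hc)))
    rwa [Finset.sum_const_zero] at this
  rw [tendsto_iff_norm_sub_tendsto_zero]
  simp_rw [Real.norm_eq_abs]
  exact squeeze_zero' (Eventually.of_forall fun n => abs_nonneg _)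
    (hdom.mono fun n hn => hbound n hn a) hsum

/-- Convergence of the regularized best response (mirror map) for a
decomposable regularizer `h(x) = ∑_a θ(x(a))` with steep kernel `θ`, together with the
quantitative bound in terms of the inverse `ψ` of `θ'`. -/
theorem mirror_map_convergence
    {α : Type*} [Fintype α] [Nonempty α] [DecidableEq α] (aStar : α)
    (θ θ' θ'' ψ : ℝ → ℝ)
    (hθc : ContinuousOn θ (Set.Icc 0 1))
    (hd1 : ∀ x ∈ Set.Ioc (0 : ℝ) 1, HasDerivWithinAt θ (θ' x) (Set.Ioc 0 1) x)
    (hd2 : ∀ x ∈ Set.Ioc (0 : ℝ) 1, HasDerivWithinAt θ' (θ'' x) (Set.Ioc 0 1) x)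
    (hconv : ∀ x ∈ Set.Ioc (0 : ℝ) 1, 0 < θ'' x)
    (hsteep : Tendsto θ' (nhdsWithin 0 (Set.Ioi 0)) atBot)
    (hψleft : ∀ x ∈ Set.Ioc (0 : ℝ) 1, ψ (θ' x) = x)
    (hψright : ∀ z ≤ θ' 1, ψ z ∈ Set.Ioc (0 : ℝ) 1 ∧ θ' (ψ z) = z)
    (y x : ℕ → α → ℝ)
    (hx : ∀ n, (∀ a, 0 ≤ x n a) ∧ (∑ a, x n a) = 1 ∧
      ∀ z : α → ℝ, (∀ a, 0 ≤ z a) → (∑ a, z a) = 1 →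
        (∑ a, y n a * z a) - ∑ a, θ (z a) ≤ (∑ a, y n a * x n a) - ∑ a, θ (x n a))
    (hy : ∀ a, a ≠ aStar → Tendsto (fun n => y n a - y n aStar) atTop atBot) :
    (∀ a, Tendsto (fun n => x n a) atTop (nhds (if a = aStar then (1 : ℝ) else 0))) ∧
    ∀ n, (∀ a, a ≠ aStar → y n a ≤ y n aStar) →
      ∀ a, |x n a - (if a = aStar then (1 : ℝ) else 0)| ≤
        ∑ a' ∈ Finset.univ.erase aStar, ψ (θ' 1 + y n a' - y n aStar) :=
  mirror_map_convergence_general aStar θ θ' θ'' ψ hθc hd1 hd2 hconv hψright y x hx hy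
end

section
/- Let Γ be a finite N-player game and a* = (a*_1,…,a*_N) a strict Nash equilibrium of Γ, and let Δ = min_i min_{a_i ≠ a*_i} [u_i(a*) − u_i(a_i; a*_{−i})] > 0 denote the minimum payoff difference at equilibrium. Then for every c ∈ (0, Δ) there exists M > 0 such that for every score profile y = (y_1,…,y_N) with y_{i}(a*_i) − y_{i}(a) > M for all players i and all actions a ≠ a*_i, one has v_{i,a*_i}(Λ(y)) − v_{i,a}(Λ(y)) > c for all players i and all actions a ≠ a*_i, where Λ is the logit map. -/
lemma one_sub_prod_le_sum {ι : Type*} (s : Finset ι) (f : ι → ℝ)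
    (h0 : ∀ j ∈ s, 0 ≤ f j) (h1 : ∀ j ∈ s, f j ≤ 1) :
    1 - ∏ j ∈ s, f j ≤ ∑ j ∈ s, (1 - f j) := by
  induction s using Finset.cons_induction with
  | empty => simp
  | cons a s ha ih =>
    rw [Finset.prod_cons, Finset.sum_cons]
    have h0a := h0 a (Finset.mem_cons_self a s)
    have h1a := h1 a (Finset.mem_cons_self a s)
    have ihs := ih (fun j hj => h0 j (Finset.mem_cons_of_mem hj))
      (fun j hj => h1 j (Finset.mem_cons_of_mem hj))
    have hp0 : 0 ≤ ∏ j ∈ s, f j :=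
      Finset.prod_nonneg (fun j hj => h0 j (Finset.mem_cons_of_mem hj))
    have hp1 : ∏ j ∈ s, f j ≤ 1 :=
      Finset.prod_le_one (fun j hj => h0 j (Finset.mem_cons_of_mem hj))
        (fun j hj => h1 j (Finset.mem_cons_of_mem hj))
    nlinarith

lemma payVec_approx {N : ℕ} {A : Fin N → Type*} [∀ j, Fintype (A j)]
    [∀ j, DecidableEq (A j)]
    (u : ∀ _ : Fin N, (∀ j, A j) → ℝ) (i : Fin N) (ai : A i) (aStar : ∀ j, A j)
    (x : ∀ j, A j → ℝ) (B : ℝ)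
    (hx0 : ∀ j b, 0 ≤ x j b) (hxsum : ∀ j, ∑ b, x j b = 1)
    (hB : ∀ p : ∀ j, A j, |u i p| ≤ B) :
    |payVec u i ai x - u i (Function.update aStar i ai) *
      (∏ j, if j = i then (1:ℝ) else x j (aStar j))| ≤
    B * (1 - ∏ j, if j = i then (1:ℝ) else x j (aStar j)) := by
  set x' := Function.update x i (fun b => if b = ai then (1:ℝ) else 0) with hx'
  have hx'0 : ∀ j b, 0 ≤ x' j b := by
    intro j b
    by_cases hj : j = i
    · subst hj; rw [hx', Function.update_self]; split <;> norm_num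
    · rw [hx', Function.update_of_ne hj]; exact hx0 j b
  have hx'sum : ∀ j, ∑ b, x' j b = 1 := by
    intro j
    by_cases hj : j = i
    · subst hj; rw [hx', Function.update_self]; simp
    · rw [hx', Function.update_of_ne hj]; exact hxsum j
  set w : (∀ j, A j) → ℝ := fun p => ∏ j, x' j (p j) with hwdef
  have hw0 : ∀ p, 0 ≤ w p := fun p => Finset.prod_nonneg fun j _ => hx'0 j (p j)
  have hwsum : ∑ p : ∀ j, A j, w p = 1 := by
    have h := Finset.prod_univ_sum (fun j => (Finset.univ : Finset (A j)))
      (fun j b => x' j b)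
    rw [Fintype.piFinset_univ] at h
    rw [hwdef, ← h]
    rw [Finset.prod_congr rfl (fun j _ => hx'sum j)]
    simp
  set t := Function.update aStar i ai with htdef
  have hwt : w t = ∏ j, if j = i then (1:ℝ) else x j (aStar j) := by
    apply Finset.prod_congr rfl
    intro j _
    by_cases hj : j = i
    · subst hj
      rw [hx', htdef, Function.update_self, Function.update_self, if_pos rfl, if_pos rfl]
    · rw [hx', htdef, Function.update_of_ne hj, Function.update_of_ne hj, if_neg hj]
  have hpay : payVec u i ai x = ∑ p : ∀ j, A j, w p * u i p := rfl
  rw [hpay, ← hwt]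
  have hsplit : ∑ p : ∀ j, A j, w p * u i p
      = w t * u i t + ∑ p ∈ Finset.univ.erase t, w p * u i p :=
    (Finset.add_sum_erase _ _ (Finset.mem_univ t)).symm
  rw [hsplit]
  have hsum_erase : ∑ p ∈ Finset.univ.erase t, w p = 1 - w t := by
    have := Finset.add_sum_erase Finset.univ w (Finset.mem_univ t)
    rw [hwsum] at this
    linarith
  have heq : w t * u i t + (∑ p ∈ Finset.univ.erase t, w p * u i p) - u i t * w t
      = ∑ p ∈ Finset.univ.erase t, w p * u i p := by ring
  rw [heq]
  calc |∑ p ∈ Finset.univ.erase t, w p * u i p|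
      ≤ ∑ p ∈ Finset.univ.erase t, |w p * u i p| := Finset.abs_sum_le_sum_abs _ _
    _ ≤ ∑ p ∈ Finset.univ.erase t, w p * B := by
        apply Finset.sum_le_sum
        intro p _
        rw [abs_mul, abs_of_nonneg (hw0 p)]
        exact mul_le_mul_of_nonneg_left (hB p) (hw0 p)
    _ = (1 - w t) * B := by rw [← Finset.sum_mul, hsum_erase]
    _ = B * (1 - w t) := by ring

/-- Near a strict Nash equilibrium with minimum payoff difference `Δ`,
if all score differences `y_i(a*_i) - y_i(a)` exceed a sufficiently large threshold `M`,
then the logit strategies exhibit a payoff gap of at least `c`, for any `c ∈ (0, Δ)`. -/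
theorem payoff_gap_near_strict_equilibrium
    {N : ℕ} {A : Fin N → Type*} [∀ j, Fintype (A j)] [∀ j, Nonempty (A j)]
    [∀ j, DecidableEq (A j)]
    (u : ∀ _ : Fin N, (∀ j, A j) → ℝ) (aStar : ∀ i, A i)
    (hNE : ∀ (i : Fin N) (a : A i), a ≠ aStar i →
      u i (Function.update aStar i a) < u i aStar)
    (Δ : ℝ) (hΔpos : 0 < Δ)
    (hΔ : IsLeast {d : ℝ | ∃ i : Fin N, ∃ a : A i, a ≠ aStar i ∧
      d = u i aStar - u i (Function.update aStar i a)} Δ) :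
    ∀ c : ℝ, 0 < c → c < Δ → ∃ M > (0 : ℝ), ∀ y : ∀ i, A i → ℝ,
      (∀ (i : Fin N) (a : A i), a ≠ aStar i → y i (aStar i) - y i a > M) →
      ∀ (i : Fin N) (a : A i), a ≠ aStar i →
        payVec u i (aStar i) (fun j => logit (y j))
          - payVec u i a (fun j => logit (y j)) > c := by
  intro c hc hcΔ
  -- uniform payoff bound
  set B : ℝ := ∑ i : Fin N, ∑ a : ∀ j, A j, |u i a| with hBdef
  have hB0 : 0 ≤ B :=
    Finset.sum_nonneg fun i _ => Finset.sum_nonneg fun a _ => abs_nonneg _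
  have hB : ∀ (i : Fin N) (a : ∀ j, A j), |u i a| ≤ B := by
    intro i a
    calc |u i a| ≤ ∑ a : ∀ j, A j, |u i a| :=
          Finset.single_le_sum (f := fun a => |u i a|) (fun _ _ => abs_nonneg _)
            (Finset.mem_univ a)
      _ ≤ B :=
          Finset.single_le_sum (f := fun i => ∑ a : ∀ j, A j, |u i a|)
            (fun _ _ => Finset.sum_nonneg fun _ _ => abs_nonneg _) (Finset.mem_univ i)
  set K : ℝ := ∑ j : Fin N, (Fintype.card (A j) : ℝ) with hKdef
  have hK0 : 0 ≤ K := Finset.sum_nonneg fun _ _ => Nat.cast_nonneg _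
  set C : ℝ := (Δ + 2 * B + 1) * (K + 1) with hCdef
  have hC0 : 0 < C := by
    apply mul_pos <;> linarith
  set M : ℝ := max 1 (Real.log (C / (Δ - c))) + 1 with hMdef
  have hM0 : 0 < M := by
    have := le_max_left 1 (Real.log (C / (Δ - c)))
    rw [hMdef]; linarith
  refine ⟨M, hM0, ?_⟩
  intro y hy i a ha
  set ε : ℝ := Real.exp (-M) with hεdef
  have hε0 : 0 < ε := Real.exp_pos _
  have hεlt : ε < (Δ - c) / C := by
    have h2 : 0 < C / (Δ - c) := div_pos hC0 (by linarith)
    have h1 : Real.log (C / (Δ - c)) < M := by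
      have := le_max_right 1 (Real.log (C / (Δ - c)))
      rw [hMdef]; linarith
    calc ε < Real.exp (-(Real.log (C / (Δ - c)))) :=
          Real.exp_lt_exp.mpr (by linarith)
      _ = (C / (Δ - c))⁻¹ := by rw [Real.exp_neg, Real.exp_log h2]
      _ = (Δ - c) / C := by rw [inv_div]
  set x : ∀ j, A j → ℝ := fun j => logit (y j) with hxdef
  have hS : ∀ j : Fin N, 0 < ∑ b, Real.exp (y j b) := fun j =>
    Finset.sum_pos (fun b _ => Real.exp_pos _) Finset.univ_nonempty
  have hx0 : ∀ j b, 0 ≤ x j b := fun j b =>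
    div_nonneg (Real.exp_pos _).le (hS j).le
  have hxsum : ∀ j, ∑ b, x j b = 1 := by
    intro j
    simp only [hxdef, logit]
    rw [← Finset.sum_div]
    exact div_self (hS j).ne'
  have hx1 : ∀ j b, x j b ≤ 1 := by
    intro j b
    calc x j b ≤ ∑ b', x j b' :=
          Finset.single_le_sum (fun b' _ => hx0 j b') (Finset.mem_univ b)
      _ = 1 := hxsum j
  have hxε : ∀ j b, b ≠ aStar j → x j b ≤ ε := by
    intro j b hb
    have h1 : Real.exp (y j (aStar j)) ≤ ∑ b', Real.exp (y j b') :=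
      Finset.single_le_sum (fun _ _ => (Real.exp_pos _).le) (Finset.mem_univ _)
    have h2 : x j b ≤ Real.exp (y j b) / Real.exp (y j (aStar j)) := by
      rw [hxdef]
      show Real.exp (y j b) / _ ≤ _
      apply div_le_div_of_nonneg_left (Real.exp_pos _).le (Real.exp_pos _) h1
    have h4 : y j b - y j (aStar j) ≤ -M := by
      have := hy j b hb; linarith
    calc x j b ≤ Real.exp (y j b) / Real.exp (y j (aStar j)) := h2
      _ = Real.exp (y j b - y j (aStar j)) := (Real.exp_sub _ _).symm
      _ ≤ Real.exp (-M) := Real.exp_le_exp.mpr h4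
  have hxa : ∀ j, 1 - x j (aStar j) ≤ (Fintype.card (A j) : ℝ) * ε := by
    intro j
    have h1 : x j (aStar j) + ∑ b ∈ Finset.univ.erase (aStar j), x j b = 1 := by
      rw [Finset.add_sum_erase Finset.univ _ (Finset.mem_univ (aStar j))]
      exact hxsum j
    have h2 : ∑ b ∈ Finset.univ.erase (aStar j), x j b
        ≤ (Fintype.card (A j) : ℝ) * ε := by
      calc ∑ b ∈ Finset.univ.erase (aStar j), x j b
          ≤ ∑ _b ∈ Finset.univ.erase (aStar j), ε :=
            Finset.sum_le_sum fun b hb => hxε j b (Finset.ne_of_mem_erase hb)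
        _ = ((Finset.univ.erase (aStar j)).card : ℝ) * ε := by
            rw [Finset.sum_const, nsmul_eq_mul]
        _ ≤ (Fintype.card (A j) : ℝ) * ε := by
            apply mul_le_mul_of_nonneg_right _ hε0.le
            exact_mod_cast Finset.card_le_univ _
    linarith
  -- the concentration product
  set P : ℝ := ∏ j, if j = i then (1:ℝ) else x j (aStar j) with hPdef
  have hPfac0 : ∀ j ∈ Finset.univ, (0:ℝ) ≤ if j = i then (1:ℝ) else x j (aStar j) := by
    intro j _; split
    · norm_num
    · exact hx0 j _
  have hPfac1 : ∀ j ∈ Finset.univ, (if j = i then (1:ℝ) else x j (aStar j)) ≤ 1 := by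
    intro j _; split
    · exact le_refl 1
    · exact hx1 j _
  have hP0 : 0 ≤ P := Finset.prod_nonneg hPfac0
  have hP1 : P ≤ 1 := Finset.prod_le_one hPfac0 hPfac1
  have hPlow : 1 - P ≤ K * ε := by
    calc 1 - P ≤ ∑ j, (1 - if j = i then (1:ℝ) else x j (aStar j)) :=
          one_sub_prod_le_sum _ _ hPfac0 hPfac1
      _ ≤ ∑ j, (Fintype.card (A j) : ℝ) * ε := by
          apply Finset.sum_le_sum
          intro j _
          have hc0 : (0:ℝ) ≤ (Fintype.card (A j) : ℝ) * ε := by positivity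
          split
          · linarith
          · exact hxa j
      _ = K * ε := by rw [hKdef, Finset.sum_mul]
  have happrox1 := payVec_approx u i (aStar i) aStar x B hx0 hxsum (hB i)
  have happrox2 := payVec_approx u i a aStar x B hx0 hxsum (hB i)
  rw [Function.update_eq_self] at happrox1
  rw [← hPdef] at happrox1 happrox2
  have hd : Δ ≤ u i aStar - u i (Function.update aStar i a) :=
    hΔ.2 ⟨i, a, ha, rfl⟩
  have habs1 := abs_le.mp happrox1
  have habs2 := abs_le.mp happrox2
  have hdP : Δ * P ≤ (u i aStar - u i (Function.update aStar i a)) * P :=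
    mul_le_mul_of_nonneg_right hd hP0
  have hfinal : (Δ + 2 * B) * (1 - P) < Δ - c := by
    have hΔB : (0:ℝ) ≤ Δ + 2 * B := by linarith
    have h1 : (Δ + 2 * B) * (1 - P) ≤ (Δ + 2 * B) * (K * ε) :=
      mul_le_mul_of_nonneg_left hPlow hΔB
    have hK1 : K ≤ K + 1 := by linarith
    have hlt : Δ + 2 * B < Δ + 2 * B + 1 := by linarith
    have hK1pos : (0:ℝ) < K + 1 := by linarith
    have hstep1 : (Δ + 2 * B) * K ≤ (Δ + 2 * B) * (K + 1) :=
      mul_le_mul_of_nonneg_left hK1 hΔB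
    have hstep2 : (Δ + 2 * B) * (K + 1) < (Δ + 2 * B + 1) * (K + 1) :=
      mul_lt_mul_of_pos_right hlt hK1pos
    have hstep : (Δ + 2 * B) * K < C := by rw [hCdef]; linarith
    have h2 : ((Δ + 2 * B) * K) * ε < C * ε := mul_lt_mul_of_pos_right hstep hε0
    have h3 : C * ε < C * ((Δ - c) / C) := mul_lt_mul_of_pos_left hεlt hC0
    have h4 : C * ((Δ - c) / C) = Δ - c := by
      rw [mul_comm]
      exact div_mul_cancel₀ _ hC0.ne'
    have h5 : (Δ + 2 * B) * (K * ε) = ((Δ + 2 * B) * K) * ε := by ring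
    linarith
  have key : Δ * P - 2 * (B * (1 - P)) = Δ - (Δ + 2 * B) * (1 - P) := by ring
  have g1 : u i aStar * P - B * (1 - P) ≤ payVec u i (aStar i) x := by linarith [habs1.1]
  have g2 : payVec u i a x ≤ u i (Function.update aStar i a) * P + B * (1 - P) := by
    linarith [habs2.2]
  have expand : (u i aStar - u i (Function.update aStar i a)) * P
      = u i aStar * P - u i (Function.update aStar i a) * P := by ring
  show payVec u i (aStar i) x - payVec u i a x > c
  linarith [hdP, hfinal, g1, g2]
end

section
/- For every integer m ≥ 1 and every real a > 0, Σ_{k=1}^{m−1} ∏_{ℓ=0}^{k−1} (1 − a/(m − ℓ)) = (m − a)/(1 + a) − (1/(1 + a))·∏_{ℓ=1}^{m} (1 − a/ℓ), where the sum over an empty index range (the case m = 1) is 0. -/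
/-- The discrete-sum identity
`∑_{k=1}^{m-1} ∏_{ℓ=0}^{k-1} (1 - a/(m-ℓ)) = (m-a)/(1+a) - (1/(1+a)) ∏_{ℓ=1}^m (1 - a/ℓ)`. -/
theorem sum_prod_vanishing_friction_identity
    (m : ℕ) (hm : 1 ≤ m) (a : ℝ) (ha : 0 < a) :
    ∑ k ∈ Finset.Icc 1 (m - 1), ∏ ℓ ∈ Finset.range k, (1 - a / ((m : ℝ) - (ℓ : ℝ)))
      = ((m : ℝ) - a) / (1 + a)
        - (1 / (1 + a)) * ∏ ℓ ∈ Finset.Icc 1 m, (1 - a / (ℓ : ℝ)) := by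
  have ha1 : (1 : ℝ) + a ≠ 0 := by positivity
  set P : ℕ → ℝ := fun k => ∏ ℓ ∈ Finset.range k, (1 - a / ((m : ℝ) - (ℓ : ℝ))) with hP
  set f : ℕ → ℝ := fun k => ((m : ℝ) - k - a) / (1 + a) * P k with hf
  have hstep : ∀ k ∈ Finset.range (m - 1), P (k + 1) = f k - f (k + 1) := by
    intro k hk
    rw [Finset.mem_range] at hk
    have hkm : (k : ℝ) + 1 < m := by
      have : k + 1 < m := by omega
      exact_mod_cast this
    have hx : (m : ℝ) - k ≠ 0 := by nlinarith
    have hps : P (k + 1) = P k * (1 - a / ((m : ℝ) - k)) := Finset.prod_range_succ _ _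
    rw [hf]
    simp only [hps]
    push_cast
    field_simp
    ring
  have htel : ∑ k ∈ Finset.range (m - 1), P (k + 1) = f 0 - f (m - 1) := by
    rw [Finset.sum_congr rfl hstep, Finset.sum_range_sub']
  have hsum : ∑ k ∈ Finset.Icc 1 (m - 1), P k = ∑ k ∈ Finset.range (m - 1), P (k + 1) := by
    have : Finset.Icc 1 (m - 1) = Finset.Ico 1 m := by
      ext x; simp [Finset.mem_Icc, Finset.mem_Ico]; omega
    rw [this, Finset.sum_Ico_eq_sum_range]
    simp [add_comm]
  have hf0 : f 0 = ((m : ℝ) - a) / (1 + a) := by simp [hf, hP]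
  -- product reindex: ∏_{ℓ ∈ Icc 1 m} (1 - a/ℓ) = (1 - a) * P (m - 1)
  have hprod : ∏ ℓ ∈ Finset.Icc 1 m, (1 - a / (ℓ : ℝ)) = (1 - a) * P (m - 1) := by
    have h1 : Finset.Icc 1 m = insert 1 (Finset.Icc 2 m) := by
      ext x; simp [Finset.mem_Icc, Finset.mem_insert]; omega
    rw [h1, Finset.prod_insert (by simp [Finset.mem_Icc])]
    congr 1
    · norm_num
    · rw [hP]
      refine (Finset.prod_nbij' (fun ℓ => m - ℓ) (fun j => m - j) ?_ ?_ ?_ ?_ ?_).symm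
      · intro ℓ hℓ; rw [Finset.mem_range] at hℓ; simp only [Finset.mem_Icc]; omega
      · intro j hj; rw [Finset.mem_Icc] at hj; simp only [Finset.mem_range]; omega
      · intro ℓ hℓ; rw [Finset.mem_range] at hℓ; omega
      · intro j hj; rw [Finset.mem_Icc] at hj; omega
      · intro ℓ hℓ; rw [Finset.mem_range] at hℓ
        have : ((m - ℓ : ℕ) : ℝ) = (m : ℝ) - ℓ := by
          have : ℓ ≤ m := by omega
          push_cast [this]; ring
        rw [this]
  have hfm : f (m - 1) = (1 / (1 + a)) * ∏ ℓ ∈ Finset.Icc 1 m, (1 - a / (ℓ : ℝ)) := by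
    rw [hprod]; simp only [hf]
    have : ((m - 1 : ℕ) : ℝ) = (m : ℝ) - 1 := by
      push_cast [hm]; ring
    rw [this]; ring
  calc ∑ k ∈ Finset.Icc 1 (m - 1), P k = f 0 - f (m - 1) := by rw [hsum, htel]
    _ = _ := by rw [hf0, hfm]
end

section
/- For every integer m ≥ 1 and every real a > 0, the quantity F_m := Σ_{k=1}^{m} ∏_{ℓ=0}^{k−1} (1 − a/(m − ℓ)) satisfies the closed form F_m = (m − a)/(1 + a) + (a/(1 + a))·∏_{ℓ=1}^{m} ((ℓ − a)/ℓ), and the recurrence ((m + 1)/(m + 1 − a))·F_{m+1} = F_m + 1 whenever a ≠ m + 1. -/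
/-- `F a m = ∑_{k=1}^{m} ∏_{ℓ=0}^{k-1} (1 - a/(m-ℓ))`. -/
noncomputable def F (a : ℝ) (m : ℕ) : ℝ :=
  ∑ k ∈ Finset.Icc 1 m, ∏ ℓ ∈ Finset.range k, (1 - a / ((m : ℝ) - (ℓ : ℝ)))

lemma F_range (a : ℝ) (m : ℕ) :
    F a m = ∑ i ∈ Finset.range m, ∏ ℓ ∈ Finset.range (1 + i), (1 - a / ((m : ℝ) - (ℓ : ℝ))) := by
  rw [F, ← Finset.Ico_add_one_right_eq_Icc, Finset.sum_Ico_eq_sum_range]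
  simp

lemma F_key (a : ℝ) (m : ℕ) :
    F a (m+1) = (1 - a / ((m:ℝ)+1)) * (1 + F a m) := by
  have e1 : F a (m+1)
      = ∑ i ∈ Finset.range (m+1), ∏ ℓ ∈ Finset.range (1 + i), (1 - a / (((m:ℝ)+1) - (ℓ : ℝ))) := by
    rw [F_range]; push_cast; rfl
  rw [e1, F_range]
  have h : ∀ i ∈ Finset.range (m+1),
      (∏ ℓ ∈ Finset.range (1 + i), (1 - a / (((m:ℝ)+1) - (ℓ : ℝ))))
      = (1 - a / ((m:ℝ)+1)) * ∏ ℓ ∈ Finset.range i, (1 - a / ((m:ℝ) - (ℓ : ℝ))) := by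
    intro i _
    rw [add_comm 1 i, Finset.prod_range_succ']
    push_cast
    rw [mul_comm]
    congr 1
    · norm_num
    · apply Finset.prod_congr rfl
      intro ℓ _
      ring_nf
  rw [Finset.sum_congr rfl h, ← Finset.mul_sum, Finset.sum_range_succ']
  have hm : ∀ i ∈ Finset.range m,
      (∏ ℓ ∈ Finset.range (i+1), (1 - a / ((m:ℝ) - (ℓ : ℝ))))
      = ∏ ℓ ∈ Finset.range (1+i), (1 - a / ((m:ℝ) - (ℓ : ℝ))) := by
    intro i _; rw [add_comm 1 i]
  rw [Finset.sum_congr rfl hm]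
  simp [add_comm]

lemma F_closed (a : ℝ) (ha : 0 < a) :
    ∀ m : ℕ, 1 ≤ m →
    F a m = ((m : ℝ) - a) / (1 + a)
        + (a / (1 + a)) * ∏ ℓ ∈ Finset.Icc 1 m, (((ℓ : ℝ) - a) / (ℓ : ℝ)) := by
  have h1a : (1 : ℝ) + a ≠ 0 := by positivity
  intro m
  induction m with
  | zero => intro h; omega
  | succ n ih =>
    intro _
    rcases Nat.eq_zero_or_pos n with hn | hn
    · subst hn
      simp [F, Finset.Icc_self]
      field_simp
    · have hF := F_key a n
      rw [hF, ih hn, Finset.prod_Icc_succ_top (by omega : 1 ≤ n + 1)]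
      have hn1 : ((n : ℝ) + 1) ≠ 0 := by positivity
      push_cast
      generalize (∏ ℓ ∈ Finset.Icc 1 n, (((ℓ : ℝ)) - a) / (ℓ : ℝ)) = P
      field_simp
      ring

/-- Closed form and recurrence for
`F_m = ∑_{k=1}^{m} ∏_{ℓ=0}^{k-1} (1 - a/(m-ℓ))`. -/
theorem F_closed_form_and_recurrence (m : ℕ) (hm : 1 ≤ m) (a : ℝ) (ha : 0 < a) :
    F a m = ((m : ℝ) - a) / (1 + a)
        + (a / (1 + a)) * ∏ ℓ ∈ Finset.Icc 1 m, (((ℓ : ℝ) - a) / (ℓ : ℝ)) ∧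
    (a ≠ (m : ℝ) + 1 →
      (((m : ℝ) + 1) / ((m : ℝ) + 1 - a)) * F a (m + 1) = F a m + 1) := by
  refine ⟨F_closed a ha m hm, fun hne => ?_⟩
  rw [F_key a m]
  have h1 : ((m : ℝ) + 1) ≠ 0 := by positivity
  have h2 : ((m : ℝ) + 1 - a) ≠ 0 := fun h => hne (by linarith)
  field_simp
  ring
end

section
/- Let c, γ, M > 0 and T ≥ 1 an integer, and let (u_n), (p_n), (z_n) be real sequences with p_1 = 0, p_{n+1} = p_n + γ·u_n and z_{n+1} = z_n + γ·p_{n+1} for all n ≥ 1. Suppose z_1 < −M and that u_n ≤ −c holds for every index n at which z_n < −M. Then z_n < −M for all n ≥ 1, and z_T ≤ z_1 − c·γ²·T(T − 1)/2. -/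
/-- The deterministic induction behind the full-information FTXL
convergence proof: if the momentum of the score difference `z` is driven by payoff
differences `u_n ≤ -c` whenever `z_n < -M`, then `z` stays below `-M` forever and
decreases quadratically. -/
theorem ftxl_deterministic_induction
    (c γ M : ℝ) (hc : 0 < c) (hγ : 0 < γ) (hM : 0 < M)
    (T : ℕ) (hT : 1 ≤ T) (u p z : ℕ → ℝ)
    (hp1 : p 1 = 0)
    (hprec : ∀ n ≥ 1, p (n + 1) = p n + γ * u n)
    (hzrec : ∀ n ≥ 1, z (n + 1) = z n + γ * p (n + 1))
    (hz1 : z 1 < -M)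
    (hu : ∀ n ≥ 1, z n < -M → u n ≤ -c) :
    (∀ n ≥ 1, z n < -M) ∧
    z T ≤ z 1 - c * γ ^ 2 * ((T : ℝ) * ((T : ℝ) - 1)) / 2 := by

  have key : ∀ n, 1 ≤ n → z n < -M ∧ p n ≤ -c * γ * ((n : ℝ) - 1) ∧
      z n ≤ z 1 - c * γ ^ 2 * ((n : ℝ) * ((n : ℝ) - 1)) / 2 := by
    intro n hn
    induction n, hn using Nat.le_induction with
    | base => refine ⟨hz1, by rw [hp1]; norm_num, by norm_num⟩
    | succ n hn ih =>
      obtain ⟨hz, hp, hzb⟩ := ih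
      have hun := hu n hn hz
      have hpn : p (n + 1) ≤ -c * γ * (n : ℝ) := by
        rw [hprec n hn]; nlinarith
      have hzn : z (n + 1) ≤ z n - c * γ ^ 2 * (n : ℝ) := by
        rw [hzrec n hn]; nlinarith
      have hnpos : (1 : ℝ) ≤ (n : ℝ) := by exact_mod_cast hn
      refine ⟨?_, ?_, ?_⟩
      · have : 0 < c * γ ^ 2 * (n : ℝ) := by positivity
        linarith
      · push_cast; linarith
      · push_cast; nlinarith
  refine ⟨fun n hn => (key n hn).1, (key T hT).2.2⟩
end
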